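/- arXiv:1712.03577 — 2 statements merged into one kernel-verified Lean document; each statement's English description precedes it below -/
import Mathlib

section
/- With step-size α = 1/L, the proximal gradient method satisfies ‖x^k − x*‖ ≤ (1 − μ/L)^k ‖x⁰ − x*‖ for all k ≥ 1. -/
/-!
The minimizer `x*` is a fixed point of `x ↦ prox_{g/L} (x - ∇f(x) / L)`: this is its first-order
optimality condition. The proximal map is nonexpansive, and the gradient step
`x ↦ x - ∇f(x) / L` is `(1 - μ/L)`-Lipschitz, because it is `1/L` times the gradient of
`L/2 ‖x‖² - f x`, a convex `(L - μ)`-smooth function, and the gradient of a convex `c`-smooth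
function is `c`-Lipschitz. So every iteration contracts the distance to `x*` by `1 - μ/L`.
-/

open InnerProductSpace Set Filter Topology

theorem nonneg_of_forall_mul_add_sq_mul_nonneg {A B : ℝ}
    (h : ∀ t ∈ Ioc (0 : ℝ) 1, 0 ≤ t * A + t ^ 2 * B) : 0 ≤ A := by
  have hcont : Continuous (fun t : ℝ => A + t * B) := by fun_prop
  have hlim : Tendsto (fun t : ℝ => A + t * B) (𝓝[>] 0) (𝓝 A) :=
    (hcont.tendsto' 0 A (by simp)).mono_left nhdsWithin_le_nhds
  refine ge_of_tendsto hlim ?_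
  filter_upwards [Ioc_mem_nhdsGT zero_lt_one] with t ht
  exact (mul_nonneg_iff_of_pos_left ht.1).mp (by linear_combination h t ht)

section

variable {E : Type*} [NormedAddCommGroup E] [InnerProductSpace ℝ E]

theorem le_add_inner_add_half_mul_sq_of_lipschitz_gradient [CompleteSpace E]
    {f : E → ℝ} {f' : E → E} {L : ℝ} (hf : ∀ x, HasGradientAt f (f' x) x)
    (hlip : ∀ x y, ‖f' x - f' y‖ ≤ L * ‖x - y‖) (x y : E) :
    f y ≤ f x + ⟪f' x, y - x⟫_ℝ + L / 2 * ‖y - x‖ ^ 2 := by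
  set d := y - x
  let φ : ℝ → ℝ := fun t => f (x + t • d) - t * ⟪f' x, d⟫_ℝ - L / 2 * t ^ 2 * ‖d‖ ^ 2
  have hφ : ∀ t, HasDerivAt φ (⟪f' (x + t • d), d⟫_ℝ - ⟪f' x, d⟫_ℝ - L * t * ‖d‖ ^ 2) t := by
    intro t
    have hline : HasDerivAt (fun s : ℝ => x + s • d) d t := by
      simpa using ((hasDerivAt_id t).smul_const d).const_add x
    have hcomp : HasDerivAt (fun s : ℝ => f (x + s • d)) ⟪f' (x + t • d), d⟫_ℝ t :=
      (hf _).hasFDerivAt.comp_hasDerivAt t hline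
    refine ((hcomp.sub ((hasDerivAt_id t).mul_const ⟪f' x, d⟫_ℝ)).sub
      (((hasDerivAt_pow 2 t).const_mul (L / 2)).mul_const (‖d‖ ^ 2))).congr_deriv ?_
    simp only [Nat.cast_ofNat]
    ring
  have hanti : AntitoneOn φ (Ici 0) := by
    refine antitoneOn_of_hasDerivWithinAt_nonpos (convex_Ici 0)
      (continuous_iff_continuousAt.2 fun t => (hφ t).continuousAt).continuousOn
      (fun t _ => (hφ t).hasDerivWithinAt) ?_
    intro t ht
    rw [interior_Ici] at ht
    have ht : 0 < t := ht
    have hgrad : ‖f' (x + t • d) - f' x‖ ≤ L * t * ‖d‖ := by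
      simpa [norm_smul, abs_of_pos ht, mul_assoc] using hlip (x + t • d) x
    have := real_inner_le_norm (f' (x + t • d) - f' x) d
    rw [inner_sub_left] at this
    nlinarith [mul_le_mul_of_nonneg_right hgrad (norm_nonneg d)]
  have hφ01 := hanti (mem_Ici.2 le_rfl) (mem_Ici.2 zero_le_one) zero_le_one
  simp only [φ, d, zero_smul, add_zero, one_smul, zero_mul, sub_zero, one_mul, one_pow,
    add_sub_cancel] at hφ01
  linarith

theorem norm_sub_le_of_quadratic_bounds {φ : E → ℝ} {T : E → E} {c : ℝ} (hc : 0 ≤ c)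
    (hlow : ∀ x y, φ x + ⟪T x, y - x⟫_ℝ ≤ φ y)
    (hup : ∀ x y, φ y ≤ φ x + ⟪T x, y - x⟫_ℝ + c / 2 * ‖y - x‖ ^ 2) (x y : E) :
    ‖T x - T y‖ ≤ c * ‖x - y‖ := by
  set u := T x - T y
  have key : ∀ s : ℝ, (2 * s - c * s ^ 2) * ‖u‖ ^ 2 ≤ ‖u‖ * ‖x - y‖ := by
    intro s
    have h1 := hlow x (y + s • u)
    have h2 := hup y (y + s • u)
    have h3 := hlow y (x - s • u)
    have h4 := hup x (x - s • u)
    simp only [add_sub_cancel_left, sub_sub_cancel_left, norm_neg, norm_smul, Real.norm_eq_abs,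
      mul_pow, sq_abs, inner_neg_right, inner_smul_right] at h2 h4
    have e1 : ⟪T x, y + s • u - x⟫_ℝ = ⟪T x, y - x⟫_ℝ + s * ⟪T x, u⟫_ℝ := by
      rw [add_sub_right_comm, inner_add_right, inner_smul_right]
    have e3 : ⟪T y, x - s • u - y⟫_ℝ = -⟪T y, y - x⟫_ℝ - s * ⟪T y, u⟫_ℝ := by
      rw [sub_right_comm, inner_sub_right, inner_smul_right, ← inner_neg_right, neg_sub]
    have eu : ⟪T x, u⟫_ℝ - ⟪T y, u⟫_ℝ = ‖u‖ ^ 2 := by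
      rw [← inner_sub_left, real_inner_self_eq_norm_sq]
    have ed : ⟪T x, y - x⟫_ℝ - ⟪T y, y - x⟫_ℝ = -⟪u, x - y⟫_ℝ := by
      rw [← inner_sub_left, ← inner_neg_right, neg_sub]
    have hcs := real_inner_le_norm u (x - y)
    rw [e1] at h1
    rw [e3] at h3
    linear_combination h1 + h2 + h3 + h4 + hcs - 2 * s * eu - ed
  rcases (norm_nonneg u).eq_or_lt with hu | hu
  · rw [← hu]; positivity
  rcases (norm_nonneg (x - y)).eq_or_lt with hxy | hxy
  · simp [u, norm_sub_eq_zero_iff.mp hxy.symm]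
  have hkey := key (‖x - y‖ / ‖u‖)
  field_simp at hkey
  nlinarith

theorem norm_gradient_step_sub_le {f : E → ℝ} {f' : E → E} {μ L : ℝ} (hL : 0 < L) (hμL : μ ≤ L)
    (hsc : ∀ x y, f y ≥ f x + ⟪f' x, y - x⟫_ℝ + μ / 2 * ‖y - x‖ ^ 2)
    (hdesc : ∀ x y, f y ≤ f x + ⟪f' x, y - x⟫_ℝ + L / 2 * ‖y - x‖ ^ 2) (x y : E) :
    ‖(x - (1 / L) • f' x) - (y - (1 / L) • f' y)‖ ≤ (1 - μ / L) * ‖x - y‖ := by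
  have hsq : ∀ x y : E,
      L / 2 * ‖y‖ ^ 2 - L / 2 * ‖x‖ ^ 2 - ⟪L • x, y - x⟫_ℝ = L / 2 * ‖y - x‖ ^ 2 := by
    intro x y
    rw [inner_smul_left, inner_sub_right, norm_sub_sq_real, real_inner_self_eq_norm_sq,
      real_inner_comm]
    simp only [conj_trivial]
    ring
  have hlip := norm_sub_le_of_quadratic_bounds (φ := fun z => L / 2 * ‖z‖ ^ 2 - f z)
    (T := fun z => L • z - f' z) (sub_nonneg.2 hμL)
    (fun x y => by linarith [hdesc x y, hsq x y, inner_sub_left (𝕜 := ℝ) (L • x) (f' x) (y - x)])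
    (fun x y => by linarith [hsc x y, hsq x y, inner_sub_left (𝕜 := ℝ) (L • x) (f' x) (y - x)]) x y
  have hstep : (x - (1 / L) • f' x) - (y - (1 / L) • f' y)
      = (1 / L) • ((L • x - f' x) - (L • y - f' y)) := by
    rw [smul_sub, smul_sub, smul_sub, smul_smul, smul_smul, one_div_mul_cancel hL.ne', one_smul,
      one_smul]
  rw [hstep, norm_smul, Real.norm_of_nonneg (by positivity)]
  calc 1 / L * ‖(L • x - f' x) - (L • y - f' y)‖ ≤ 1 / L * ((L - μ) * ‖x - y‖) := by gcongr
    _ = (1 - μ / L) * ‖x - y‖ := by field_simp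

theorem inner_add_sub_nonneg_of_isMinOn_add {s : Set E} {G φ : E → ℝ} {p v : E} {M : ℝ}
    (hG : ConvexOn ℝ s G) (hp : p ∈ s) (hmin : IsMinOn (fun z => φ z + G z) s p)
    (hφ : ∀ z, φ z ≤ φ p + ⟪v, z - p⟫_ℝ + M / 2 * ‖z - p‖ ^ 2) {z : E} (hz : z ∈ s) :
    0 ≤ ⟪v, z - p⟫_ℝ + (G z - G p) := by
  refine nonneg_of_forall_mul_add_sq_mul_nonneg (B := M / 2 * ‖z - p‖ ^ 2) fun t ⟨ht0, ht1⟩ => ?_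
  have hw : t • z + (1 - t) • p = p + t • (z - p) := by module
  have hGw := hG.2 hz hp ht0.le (sub_nonneg.2 ht1) (add_sub_cancel t 1)
  have hminw :=
    isMinOn_iff.mp hmin _ (hG.1 hz hp ht0.le (sub_nonneg.2 ht1) (add_sub_cancel t 1))
  have hφw := hφ (t • z + (1 - t) • p)
  rw [hw] at hGw hminw hφw
  simp only [add_sub_cancel_left, inner_smul_right, norm_smul, Real.norm_of_nonneg ht0.le,
    smul_eq_mul] at hGw hminw hφw
  linear_combination hminw + hφw + hGw

theorem norm_sub_le_of_isMinOn_prox {s : Set E} {G : E → ℝ} {c : ℝ} {a b p q : E}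
    (hG : ConvexOn ℝ s G) (hc : 0 ≤ c) (hp : p ∈ s) (hq : q ∈ s)
    (hpmin : IsMinOn (fun z => 1 / 2 * ‖z - a‖ ^ 2 + c * G z) s p)
    (hqmin : IsMinOn (fun z => 1 / 2 * ‖z - b‖ ^ 2 + c * G z) s q) :
    ‖p - q‖ ≤ ‖a - b‖ := by
  have hcG : ConvexOn ℝ s fun z => c * G z := hG.smul hc
  have hquad : ∀ a p z : E,
      1 / 2 * ‖z - a‖ ^ 2 ≤ 1 / 2 * ‖p - a‖ ^ 2 + ⟪p - a, z - p⟫_ℝ + 1 / 2 * ‖z - p‖ ^ 2 := by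
    intro a p z
    rw [show z - a = (p - a) + (z - p) by abel, norm_add_sq_real]
    linarith
  have h1 := inner_add_sub_nonneg_of_isMinOn_add hcG hp hpmin (hquad a p) hq
  have h2 := inner_add_sub_nonneg_of_isMinOn_add hcG hq hqmin (hquad b q) hp
  have hsum : ‖p - q‖ ^ 2 ≤ ⟪a - b, p - q⟫_ℝ := by
    have : ⟪p - a, q - p⟫_ℝ + ⟪q - b, p - q⟫_ℝ = ⟪a - b, p - q⟫_ℝ - ‖p - q‖ ^ 2 := by
      rw [← real_inner_self_eq_norm_sq, ← neg_sub p q, inner_neg_right, neg_add_eq_sub,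
        ← inner_sub_left, ← inner_sub_left]
      congr 1; abel
    linarith
  nlinarith [real_inner_le_norm (a - b) (p - q), norm_nonneg (p - q), norm_nonneg (a - b)]

theorem isMinOn_prox_gradient_step {s : Set E} {G f : E → ℝ} {f' : E → E} {L : ℝ} {x : E}
    (hL : 0 < L) (hG : ConvexOn ℝ s G)
    (hdesc : ∀ y, f y ≤ f x + ⟪f' x, y - x⟫_ℝ + L / 2 * ‖y - x‖ ^ 2)
    (hx : x ∈ s) (hmin : IsMinOn (fun z => f z + G z) s x) :
    IsMinOn (fun z => 1 / 2 * ‖z - (x - (1 / L) • f' x)‖ ^ 2 + 1 / L * G z) s x := by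
  refine isMinOn_iff.mpr fun z hz => ?_
  have hopt := inner_add_sub_nonneg_of_isMinOn_add hG hx hmin hdesc hz
  have hexp : ‖z - (x - (1 / L) • f' x)‖ ^ 2
      = ‖z - x‖ ^ 2 + 2 * (1 / L) * ⟪f' x, z - x⟫_ℝ + ‖(1 / L) • f' x‖ ^ 2 := by
    rw [show z - (x - (1 / L) • f' x) = (z - x) + (1 / L) • f' x by abel, norm_add_sq_real,
      inner_smul_right, real_inner_comm]
    ring
  simp only [sub_sub_cancel, hexp]
  nlinarith [mul_nonneg (one_div_pos.2 hL).le hopt, sq_nonneg ‖z - x‖]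

end

theorem convexOn_toReal_of_ne_bot {E : Type*} [AddCommGroup E] [Module ℝ E] {g : E → EReal}
    (hbot : ∀ x, g x ≠ ⊥)
    (hconv : ∀ x y : E, ∀ t : ℝ, 0 ≤ t → t ≤ 1 →
      g (t • x + (1 - t) • y) ≤ (t : EReal) * g x + ((1 - t : ℝ) : EReal) * g y) :
    ConvexOn ℝ {x | g x ≠ ⊤} fun x => (g x).toReal := by
  have hle : ∀ x ∈ {x | g x ≠ ⊤}, ∀ y ∈ {x | g x ≠ ⊤}, ∀ a b : ℝ, 0 ≤ a → 0 ≤ b → a + b = 1 →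
      g (a • x + b • y) ≤ ((a * (g x).toReal + b * (g y).toReal : ℝ) : EReal) := by
    intro x hx y hy a b ha hb hab
    obtain rfl : b = 1 - a := eq_sub_of_add_eq' hab
    have := hconv x y a ha (by linarith)
    rwa [← EReal.coe_toReal hx (hbot x), ← EReal.coe_toReal hy (hbot y), ← EReal.coe_mul,
      ← EReal.coe_mul, ← EReal.coe_add] at this
  refine ⟨fun x hx y hy a b ha hb hab => ?_, fun x hx y hy a b ha hb hab => ?_⟩
  · exact ne_top_of_le_ne_top (EReal.coe_ne_top _) (hle x hx y hy a b ha hb hab)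
  · have h := hle x hx y hy a b ha hb hab
    simpa only [EReal.toReal_coe, smul_eq_mul] using
      EReal.toReal_le_toReal h (hbot _) (EReal.coe_ne_top _)

theorem isMinOn_toReal_of_forall_le {α : Type*} {φ : α → ℝ} {g : α → EReal} {c : ℝ} {p y₀ : α}
    (hc : 0 < c) (hbot : ∀ x, g x ≠ ⊥) (hy₀ : g y₀ ≠ ⊤)
    (hmin : ∀ y, (φ p : EReal) + c * g p ≤ φ y + c * g y) :
    p ∈ {x | g x ≠ ⊤} ∧ IsMinOn (fun x => φ x + c * (g x).toReal) {x | g x ≠ ⊤} p := by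
  have hp : g p ≠ ⊤ := by
    intro htop
    have := hmin y₀
    rw [htop, EReal.coe_mul_top_of_pos hc, EReal.coe_add_top, top_le_iff,
      ← EReal.coe_toReal hy₀ (hbot y₀)] at this
    exact EReal.coe_ne_top _ this
  refine ⟨hp, isMinOn_iff.mpr fun y hy => ?_⟩
  have := hmin y
  rwa [← EReal.coe_toReal hp (hbot p), ← EReal.coe_toReal hy (hbot y), ← EReal.coe_mul,
    ← EReal.coe_mul, ← EReal.coe_add, ← EReal.coe_add, EReal.coe_le_coe_iff] at this

theorem stmt_7_general {n : ℕ} (μ L : ℝ) (hμ : 0 < μ) (hμL : μ ≤ L)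
    (f : EuclideanSpace ℝ (Fin n) → ℝ)
    (f' : EuclideanSpace ℝ (Fin n) → EuclideanSpace ℝ (Fin n))
    (hdiff : ∀ x, HasGradientAt f (f' x) x)
    (hsc : ∀ x y, f y ≥ f x + ⟪f' x, y - x⟫_ℝ + μ / 2 * ‖y - x‖ ^ 2)
    (hlip : ∀ x y, ‖f' x - f' y‖ ≤ L * ‖x - y‖)
    (g : EuclideanSpace ℝ (Fin n) → EReal)
    (hproper : ∃ x, g x ≠ ⊤) (hnotbot : ∀ x, g x ≠ ⊥)
    (hconv : ∀ x y : EuclideanSpace ℝ (Fin n), ∀ t : ℝ, 0 ≤ t → t ≤ 1 →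
      g (t • x + (1 - t) • y) ≤ (t : EReal) * g x + ((1 - t : ℝ) : EReal) * g y)
    (xstar : EuclideanSpace ℝ (Fin n))
    (hmin : ∀ y, (f xstar : EReal) + g xstar ≤ (f y : EReal) + g y)
    (x : ℕ → EuclideanSpace ℝ (Fin n))
    (hstep : ∀ k, ∀ y,
      ((1/2 * ‖x (k+1) - (x k - (1/L) • f' (x k))‖^2 : ℝ) : EReal) + ((1/L : ℝ) : EReal) * g (x (k+1)) ≤
      ((1/2 * ‖y - (x k - (1/L) • f' (x k))‖^2 : ℝ) : EReal) + ((1/L : ℝ) : EReal) * g y) :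
    ∀ k : ℕ, 1 ≤ k → ‖x k - xstar‖ ≤ (1 - μ / L) ^ k * ‖x 0 - xstar‖ := by
  intro k _
  have hL : 0 < L := hμ.trans_le hμL
  obtain ⟨y₀, hy₀⟩ := hproper
  have hG := convexOn_toReal_of_ne_bot hnotbot hconv
  have hdesc := le_add_inner_add_half_mul_sq_of_lipschitz_gradient hdiff hlip
  obtain ⟨hxstar, hxstar_min⟩ :=
    isMinOn_toReal_of_forall_le (φ := f) one_pos hnotbot hy₀ (by simpa using hmin)
  simp only [one_mul] at hxstar_min
  have hfixed := isMinOn_prox_gradient_step hL hG (hdesc xstar) hxstar hxstar_min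
  refine le_geom (u := fun k => ‖x k - xstar‖) (sub_nonneg.2 ((div_le_one hL).2 hμL)) k
    fun j _ => ?_
  obtain ⟨hxj, hxj_min⟩ := isMinOn_toReal_of_forall_le (p := x (j + 1))
    (φ := fun z => 1 / 2 * ‖z - (x j - (1 / L) • f' (x j))‖ ^ 2) (one_div_pos.2 hL) hnotbot hy₀
    (hstep j)
  calc ‖x (j + 1) - xstar‖
      ≤ ‖(x j - (1 / L) • f' (x j)) - (xstar - (1 / L) • f' xstar)‖ :=
        norm_sub_le_of_isMinOn_prox hG (one_div_pos.2 hL).le hxj hxstar hxj_min hfixed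
    _ ≤ (1 - μ / L) * ‖x j - xstar‖ := norm_gradient_step_sub_le hL hμL hsc hdesc _ _

/-- Linear convergence of the proximal gradient method with step size `1/L`:
`‖x^k - x*‖ ≤ (1 - μ/L)^k ‖x⁰ - x*‖`. -/
theorem stmt_7 {n : ℕ} (μ L : ℝ) (hμ : 0 < μ) (hμL : μ ≤ L)
    (f : EuclideanSpace ℝ (Fin n) → ℝ)
    (f' : EuclideanSpace ℝ (Fin n) → EuclideanSpace ℝ (Fin n))
    (hdiff : ∀ x, HasGradientAt f (f' x) x)
    (hsc : ∀ x y, f y ≥ f x + ⟪f' x, y - x⟫_ℝ + μ / 2 * ‖y - x‖ ^ 2)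
    (hlip : ∀ x y, ‖f' x - f' y‖ ≤ L * ‖x - y‖)
    (g : EuclideanSpace ℝ (Fin n) → EReal)
    (hproper : ∃ x, g x ≠ ⊤) (hnotbot : ∀ x, g x ≠ ⊥)
    (hconv : ∀ x y : EuclideanSpace ℝ (Fin n), ∀ t : ℝ, 0 ≤ t → t ≤ 1 →
      g (t • x + (1 - t) • y) ≤ (t : EReal) * g x + ((1 - t : ℝ) : EReal) * g y)
    (hlsc : LowerSemicontinuous g)
    (xstar : EuclideanSpace ℝ (Fin n))
    (hmin : ∀ y, (f xstar : EReal) + g xstar ≤ (f y : EReal) + g y)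
    (x : ℕ → EuclideanSpace ℝ (Fin n))
    (hstep : ∀ k, ∀ y,
      ((1/2 * ‖x (k+1) - (x k - (1/L) • f' (x k))‖^2 : ℝ) : EReal) + ((1/L : ℝ) : EReal) * g (x (k+1)) ≤
      ((1/2 * ‖y - (x k - (1/L) • f' (x k))‖^2 : ℝ) : EReal) + ((1/L : ℝ) : EReal) * g y) :
    ∀ k : ℕ, 1 ≤ k → ‖x k - xstar‖ ≤ (1 - μ / L) ^ k * ‖x 0 - xstar‖ :=
  stmt_7_general μ L hμ hμL f f' hdiff hsc hlip g hproper hnotbot hconv xstar hmin x hstep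
end

section
/- (Finite active-set identification, general step-size.) Under the nondegeneracy assumption, if 0 < α < 2/L and ‖x^k − x*‖ ≤ δα/3, then the proximal gradient step with step-size α sets x_i^{k+1} = x_i* for every i in the active-set Z. -/
/-! A subgradient `(p - y) / α` of `g` at `y` makes `y` a minimizer of `z ↦ ½(z - p)² + α g z`;
the quadratic term makes that minimizer unique, so the proximal step lands exactly on `x*ᵢ`
as soon as the scaled forward step `(xᵏᵢ - α∇ᵢf(xᵏ) - x*ᵢ) / α` lies in `∂gᵢ(x*ᵢ)`. Near `x*`
that scaled forward step is within `δ/3 + αLδ/3 < δ` of `-∇ᵢf(x*)`, hence in the interior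
`(lᵢ, uᵢ)` of the subdifferential. -/

open InnerProductSpace

/-- The convex subdifferential of `g : ℝ → ℝ ∪ {∞}` at `y`. -/
def subdiff (g : ℝ → EReal) (y : ℝ) : Set ℝ :=
  {v : ℝ | ∀ z : ℝ, g y + ((v * (z - y) : ℝ) : EReal) ≤ g z}

/-- `x = prox_{αg}(p)`. -/
def IsProxPoint (g : ℝ → EReal) (α p x : ℝ) : Prop :=
  ∀ z : ℝ, ((1/2 * (x - p)^2 : ℝ) : EReal) + (α : EReal) * g x ≤
    ((1/2 * (z - p)^2 : ℝ) : EReal) + (α : EReal) * g z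

lemma ne_top_of_mem_subdiff {g : ℝ → EReal} {y v : ℝ} (hproper : ∃ t, g t ≠ ⊤)
    (hv : v ∈ subdiff g y) : g y ≠ ⊤ := by
  obtain ⟨t, ht⟩ := hproper
  intro hy
  have := hv t
  rw [hy, EReal.top_add_coe, top_le_iff] at this
  exact ht this

lemma IsProxPoint.eq_of_mem_subdiff {g : ℝ → EReal} {α p x y : ℝ} (hα : 0 < α)
    (hbot : ∀ t, g t ≠ ⊥) (hy : g y ≠ ⊤) (hv : (p - y) / α ∈ subdiff g y)
    (hx : IsProxPoint g α p x) : x = y := by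
  obtain ⟨r, hr⟩ : ∃ r : ℝ, g y = r := ⟨_, (EReal.coe_toReal hy (hbot y)).symm⟩
  have hxy := hx y
  have hx_top : g x ≠ ⊤ := by
    intro htop
    rw [htop, hr, EReal.coe_mul_top_of_pos (by exact_mod_cast hα), EReal.coe_add_top,
      ← EReal.coe_mul, ← EReal.coe_add, top_le_iff] at hxy
    exact EReal.coe_ne_top _ hxy
  obtain ⟨s, hs⟩ : ∃ s : ℝ, g x = s := ⟨_, (EReal.coe_toReal hx_top (hbot x)).symm⟩
  rw [hr, hs] at hxy
  norm_cast at hxy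
  have hsub := hv x
  rw [hr, hs] at hsub
  norm_cast at hsub
  have hsub' : (p - y) * (x - y) ≤ α * (s - r) := by
    rw [show (p - y) * (x - y) = α * ((p - y) / α * (x - y)) by field_simp]
    exact mul_le_mul_of_nonneg_left (by linarith) hα.le
  -- `½(x - p)² + (p - y)(x - y) - ½(y - p)² = ½(x - y)²`
  have hsq : (x - y) ^ 2 ≤ 0 := by nlinarith
  nlinarith [sq_nonneg (x - y)]

lemma EReal.lt_coe_of_le_coe_sub {l : EReal} {a δ v : ℝ} (h : (δ : EReal) ≤ a - l)
    (hv : a - δ < v) : l < v := by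
  induction l using EReal.rec with
  | bot => exact EReal.bot_lt_coe v
  | top => simp at h
  | coe l =>
    norm_cast at h ⊢
    linarith

lemma EReal.coe_lt_of_le_add_coe {u : EReal} {b δ v : ℝ} (h : (δ : EReal) ≤ u + b)
    (hv : v < δ - b) : v < u := by
  induction u using EReal.rec with
  | bot => simp at h
  | top => exact EReal.coe_lt_top v
  | coe u =>
    norm_cast at h ⊢
    linarith

lemma abs_forwardStep_div_add_lt {n : ℕ} {F : EuclideanSpace ℝ (Fin n) → EuclideanSpace ℝ (Fin n)}
    {L α δ : ℝ} (hlip : ∀ x y, ‖F x - F y‖ ≤ L * ‖x - y‖) (hL : 0 ≤ L) (hα : 0 < α)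
    (hαL : α * L < 2)
    (hδ : 0 < δ) {x x₀ : EuclideanSpace ℝ (Fin n)} (hx : ‖x - x₀‖ ≤ δ * α / 3) (i : Fin n) :
    |(x i - α * F x i - x₀ i) / α + F x₀ i| < δ := by
  have hxi : |x i - x₀ i| ≤ δ * α / 3 :=
    (PiLp.norm_apply_le (x - x₀) i).trans hx
  have hFi : |F x i - F x₀ i| ≤ L * (δ * α / 3) :=
    ((PiLp.norm_apply_le (F x - F x₀) i).trans (hlip x x₀)).trans
      (mul_le_mul_of_nonneg_left hx hL)
  have hsplit : (x i - α * F x i - x₀ i) / α + F x₀ i =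
      (x i - x₀ i) / α - (F x i - F x₀ i) := by
    field_simp
    ring
  have hxi' : |(x i - x₀ i) / α| ≤ δ / 3 := by
    rw [abs_div, abs_of_pos hα, div_le_iff₀ hα]
    linarith
  calc |(x i - α * F x i - x₀ i) / α + F x₀ i|
      ≤ |(x i - x₀ i) / α| + |F x i - F x₀ i| := hsplit ▸ abs_sub _ _
    _ < δ := by nlinarith

theorem stmt_12_general {n : ℕ} (L : ℝ)
    (f' : EuclideanSpace ℝ (Fin n) → EuclideanSpace ℝ (Fin n))
    (hlip : ∀ x y, ‖f' x - f' y‖ ≤ L * ‖x - y‖)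
    (g : Fin n → ℝ → EReal)
    (hproper : ∀ i, ∃ t, g i t ≠ ⊤) (hnotbot : ∀ i t, g i t ≠ ⊥)
    (xstar : EuclideanSpace ℝ (Fin n))
    (Z : Set (Fin n))
    (l u : Fin n → EReal)
    (hlu : ∀ i ∈ Z, interior (subdiff (g i) (xstar i)) =
      {v : ℝ | l i < (v : EReal) ∧ (v : EReal) < u i})
    (δ : ℝ) (hδpos : 0 < δ)
    (hδ : ∀ i ∈ Z, (δ : EReal) ≤ ((-(f' xstar i) : ℝ) : EReal) - l i ∧
      (δ : EReal) ≤ u i + ((f' xstar i : ℝ) : EReal))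
    (α : ℝ) (hα : 0 < α) (hα2 : α < 2 / L)
    (xk xnext : EuclideanSpace ℝ (Fin n))
    (hk : ‖xk - xstar‖ ≤ δ * α / 3)
    (hstep : ∀ i, ∀ z : ℝ,
      ((1/2 * (xnext i - (xk i - α * f' xk i))^2 : ℝ) : EReal)
          + (α : EReal) * g i (xnext i) ≤
      ((1/2 * (z - (xk i - α * f' xk i))^2 : ℝ) : EReal)
          + (α : EReal) * g i z) :
    ∀ i ∈ Z, xnext i = xstar i := by
  intro i hi
  have hL : 0 < L := by simpa using hα.trans hα2
  have hαL : α * L < 2 := (lt_div_iff₀ hL).mp hα2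
  have hclose := abs_lt.mp (abs_forwardStep_div_add_lt hlip hL.le hα hαL hδpos hk i)
  have hv : (xk i - α * f' xk i - xstar i) / α ∈ subdiff (g i) (xstar i) := by
    refine interior_subset ?_
    rw [hlu i hi]
    exact ⟨EReal.lt_coe_of_le_coe_sub (hδ i hi).1 (by linarith),
      EReal.coe_lt_of_le_add_coe (hδ i hi).2 (by linarith)⟩
  exact IsProxPoint.eq_of_mem_subdiff hα (hnotbot i) (ne_top_of_mem_subdiff (hproper i) hv) hv
    (hstep i)

/-- Finite active-set identification for the proximal gradient step with step size
`0 < α < 2/L`: if `‖x^k - x*‖ ≤ δα/3` then the next iterate agrees with `x*` on the active set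
`Z = {i : ∂gᵢ(xᵢ*) is not a singleton}`, where
`δ = min_{i ∈ Z} min {-∇ᵢf(x*) - lᵢ, uᵢ + ∇ᵢf(x*)} > 0` and
`(lᵢ, uᵢ) = int ∂gᵢ(xᵢ*)` (nondegeneracy: `-∇ᵢf(x*) ∈ int ∂gᵢ(xᵢ*)` for `i ∈ Z`). -/
theorem stmt_12 {n : ℕ} (μ L : ℝ) (hμ : 0 < μ) (hμL : μ ≤ L)
    (f : EuclideanSpace ℝ (Fin n) → ℝ)
    (f' : EuclideanSpace ℝ (Fin n) → EuclideanSpace ℝ (Fin n))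
    (hdiff : ∀ x, HasGradientAt f (f' x) x)
    (hsc : ∀ x y, f y ≥ f x + ⟪f' x, y - x⟫_ℝ + μ / 2 * ‖y - x‖ ^ 2)
    (hlip : ∀ x y, ‖f' x - f' y‖ ≤ L * ‖x - y‖)
    (g : Fin n → ℝ → EReal)
    (hproper : ∀ i, ∃ t, g i t ≠ ⊤) (hnotbot : ∀ i t, g i t ≠ ⊥)
    (hconv : ∀ i, ∀ a b t : ℝ, 0 ≤ t → t ≤ 1 →
      g i (t * a + (1 - t) * b) ≤ (t : EReal) * g i a + ((1 - t : ℝ) : EReal) * g i b)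
    (hlsc : ∀ i, LowerSemicontinuous (g i))
    (xstar : EuclideanSpace ℝ (Fin n))
    (hmin : ∀ y, (f xstar : EReal) + ∑ i, g i (xstar i) ≤ (f y : EReal) + ∑ i, g i (y i))
    (Z : Set (Fin n)) (hZ : Z = {i | ¬ (subdiff (g i) (xstar i)).Subsingleton})
    (l u : Fin n → EReal)
    (hlu : ∀ i ∈ Z, interior (subdiff (g i) (xstar i)) =
      {v : ℝ | l i < (v : EReal) ∧ (v : EReal) < u i})
    (hnondegen₁ : ∀ i ∈ Z, (-(f' xstar i)) ∈ interior (subdiff (g i) (xstar i)))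
    (hnondegen₂ : ∀ i ∉ Z, (-(f' xstar i)) ∈ subdiff (g i) (xstar i))
    (δ : ℝ) (hδpos : 0 < δ)
    (hδ : ∀ i ∈ Z, (δ : EReal) ≤ ((-(f' xstar i) : ℝ) : EReal) - l i ∧
      (δ : EReal) ≤ u i + ((f' xstar i : ℝ) : EReal))
    (α : ℝ) (hα : 0 < α) (hα2 : α < 2 / L)
    (xk xnext : EuclideanSpace ℝ (Fin n))
    (hk : ‖xk - xstar‖ ≤ δ * α / 3)
    (hstep : ∀ i, ∀ z : ℝ,
      ((1/2 * (xnext i - (xk i - α * f' xk i))^2 : ℝ) : EReal)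
          + (α : EReal) * g i (xnext i) ≤
      ((1/2 * (z - (xk i - α * f' xk i))^2 : ℝ) : EReal)
          + (α : EReal) * g i z) :
    ∀ i ∈ Z, xnext i = xstar i :=
  stmt_12_general L f' hlip g hproper hnotbot xstar Z l u hlu δ hδpos hδ α hα hα2 xk xnext hk hstep
end
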